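/- Fix strictly positive numbers μ and ν. Let I = (a,b) be an interval of length at least 2μ/ν, and let f be a C¹ function on I such that at each point x ∈ I either |f(x)| > μ or |f′(x)| > ν. Let g be a function on I with |g(x)| < μ for all x ∈ I. Then there is an injective map assigning to each zero x_i ∈ I of f with x_i − a > μ/ν and b − x_i > μ/ν a zero x_i′ of f + g with x_i′ ∈ (x_i − μ/ν, x_i + μ/ν), the images of distinct such zeros being distinct. -/

import Mathlib

/-!
Near a zero `x` of `f` we have `|f'| > ν` wherever `|f| < μ`, so by Darboux's theorem `f'` keeps
one sign on the maximal interval `(q, p) ∋ x` on which `|f| < μ`. Moving away from `0` at speed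
greater than `ν`, `f` leaves the band `|f| < μ` within distance `μ / ν` on either side of `x`, and
`f (q)`, `f (p)` have opposite signs and absolute value at least `μ`. As `|g| < μ`, `f + g` changes
sign on `[q, p]` and vanishes there. Two such intervals belonging to distinct zeros cannot overlap,
as `f` would be strictly monotone on their union; hence the chosen zeros of `f + g` are ordered
like the zeros of `f`.
-/

open Set

theorem Convex.forall_deriv_pos_or_forall_deriv_neg {D : Set ℝ} (hD : Convex ℝ D) {f : ℝ → ℝ}
    (hf' : ∀ x ∈ D, deriv f x ≠ 0) :
    (∀ x ∈ D, 0 < deriv f x) ∨ ∀ x ∈ D, deriv f x < 0 :=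
  (hasDerivWithinAt_forall_lt_or_forall_gt_of_forall_ne hD
    (fun x hx => (differentiableAt_of_deriv_ne_zero (hf' x hx)).hasDerivAt.hasDerivWithinAt)
    hf').symm

theorem Convex.strictMonoOn_or_strictAntiOn_of_deriv_ne_zero {D : Set ℝ} (hD : Convex ℝ D)
    {f : ℝ → ℝ} (hf : ContinuousOn f D) (hf' : ∀ x ∈ interior D, deriv f x ≠ 0) :
    StrictMonoOn f D ∨ StrictAntiOn f D :=
  hD.interior.forall_deriv_pos_or_forall_deriv_neg hf' |>.imp
    (strictMonoOn_of_deriv_pos hD hf) (strictAntiOn_of_deriv_neg hD hf)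

theorem Convex.mul_sub_lt_abs_image_sub_of_lt_abs_deriv {D : Set ℝ} (hD : Convex ℝ D)
    {f : ℝ → ℝ} (hf : ContinuousOn f D) {ν : ℝ} (hν : 0 ≤ ν)
    (hf' : ∀ x ∈ interior D, ν < |deriv f x|) :
    ∀ x ∈ D, ∀ y ∈ D, x < y → ν * (y - x) < |f y - f x| := by
  intro x hx y hy hxy
  have hne : ∀ t ∈ interior D, deriv f t ≠ 0 := fun t ht =>
    abs_pos.1 (hν.trans_lt (hf' t ht))
  have hdiff : DifferentiableOn ℝ f (interior D) := fun t ht =>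
    (differentiableAt_of_deriv_ne_zero (hne t ht)).differentiableWithinAt
  rcases hD.interior.forall_deriv_pos_or_forall_deriv_neg hne with hpos | hneg
  · have hgt : ∀ t ∈ interior D, ν < deriv f t := fun t ht => by
      simpa [abs_of_pos (hpos t ht)] using hf' t ht
    exact (hD.mul_sub_lt_image_sub_of_lt_deriv hf hdiff hgt x hx y hy hxy).trans_le
      (le_abs_self _)
  · have hlt : ∀ t ∈ interior D, deriv f t < -ν := fun t ht => by
      have := hf' t ht
      rw [abs_of_neg (hneg t ht)] at this
      linarith
    have := hD.image_sub_lt_mul_sub_of_deriv_lt hf hdiff hlt x hx y hy hxy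
    linarith [neg_abs_le (f y - f x)]

section ZerosInBand

variable {μ ν : ℝ} {f : ℝ → ℝ}

theorem exists_right_exit_of_lt_abs_deriv (hμ : 0 < μ) (hν : 0 < ν) {x : ℝ}
    (hf : ContinuousOn f (Icc x (x + μ / ν)))
    (hf' : ∀ t ∈ Ioo x (x + μ / ν), |f t| < μ → ν < |deriv f t|) (hfx : f x = 0) :
    ∃ p ∈ Ioc x (x + μ / ν), μ ≤ |f p| ∧ ∀ t ∈ Ico x p, |f t| < μ := by
  have hδ : x < x + μ / ν := lt_add_of_pos_right x (div_pos hμ hν)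
  set S := Icc x (x + μ / ν) ∩ (fun t => |f t|) ⁻¹' Ici μ
  have hS : IsCompact S := isCompact_Icc.of_isClosed_subset
    (hf.abs.preimage_isClosed_of_isClosed isClosed_Icc isClosed_Ici) inter_subset_left
  have hSne : S.Nonempty := by
    by_contra hS
    have hband : ∀ t ∈ Icc x (x + μ / ν), |f t| < μ := fun t ht =>
      not_le.1 fun h => hS ⟨t, ht, h⟩
    have := (convex_Icc x (x + μ / ν)).mul_sub_lt_abs_image_sub_of_lt_abs_deriv hf hν.le
      (fun t ht => by
        rw [interior_Icc] at ht
        exact hf' t ht (hband t (Ioo_subset_Icc_self ht)))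
      x (left_mem_Icc.2 hδ.le) _ (right_mem_Icc.2 hδ.le) hδ
    rw [hfx, sub_zero, add_sub_cancel_left, mul_div_cancel₀ _ hν.ne'] at this
    linarith [hband _ (right_mem_Icc.2 hδ.le)]
  obtain ⟨p, ⟨hpI, hpμ⟩, hpmin⟩ := hS.exists_isLeast hSne
  have hxp : x ≠ p := by
    rintro rfl
    exact hμ.not_ge (by simpa [hfx] using hpμ)
  refine ⟨p, ⟨lt_of_le_of_ne hpI.1 hxp, hpI.2⟩, hpμ, fun t ht => not_le.1 fun h => ?_⟩
  exact (hpmin ⟨⟨ht.1, ht.2.le.trans hpI.2⟩, h⟩).not_gt ht.2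

theorem exists_left_exit_of_lt_abs_deriv (hμ : 0 < μ) (hν : 0 < ν) {x : ℝ}
    (hf : ContinuousOn f (Icc (x - μ / ν) x))
    (hf' : ∀ t ∈ Ioo (x - μ / ν) x, |f t| < μ → ν < |deriv f t|) (hfx : f x = 0) :
    ∃ q ∈ Ico (x - μ / ν) x, μ ≤ |f q| ∧ ∀ t ∈ Ioc q x, |f t| < μ := by
  have hneg : MapsTo (fun t => -t) (Icc (-x) (-x + μ / ν)) (Icc (x - μ / ν) x) :=
    fun t ht => ⟨by linarith [ht.2], by linarith [ht.1]⟩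
  obtain ⟨p, hp, hpμ, hband⟩ := exists_right_exit_of_lt_abs_deriv (f := fun t => f (-t)) hμ hν
    (hf.comp continuousOn_neg hneg)
    (fun t ht hft => by
      rw [deriv_comp_neg, abs_neg]
      exact hf' _ ⟨by linarith [ht.2], by linarith [ht.1]⟩ hft)
    (by simpa using hfx)
  refine ⟨-p, ⟨by linarith [hp.2], by linarith [hp.1]⟩, hpμ, fun t ht => ?_⟩
  simpa using hband (-t) ⟨by linarith [ht.2], by linarith [ht.1]⟩

theorem exists_band_around_zero (hμ : 0 < μ) (hν : 0 < ν) {U : Set ℝ} (hf : ContinuousOn f U)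
    (hrep : ∀ t ∈ U, μ < |f t| ∨ ν < |deriv f t|) {x : ℝ}
    (hxU : Icc (x - μ / ν) (x + μ / ν) ⊆ U) (hfx : f x = 0) :
    ∃ q p, x - μ / ν ≤ q ∧ p ≤ x + μ / ν ∧ x ∈ Ioo q p ∧ μ ≤ |f q| ∧ μ ≤ |f p| ∧
      ∀ t ∈ Ioo q p, |f t| < μ := by
  have hδ : 0 < μ / ν := div_pos hμ hν
  have hf' : ∀ t ∈ Icc (x - μ / ν) (x + μ / ν), |f t| < μ → ν < |deriv f t| :=
    fun t ht h => (hrep t (hxU ht)).resolve_left h.le.not_gt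
  obtain ⟨q, hq, hqμ, hbandq⟩ := exists_left_exit_of_lt_abs_deriv hμ hν
    (hf.mono ((Icc_subset_Icc le_rfl (by linarith)).trans hxU))
    (fun t ht => hf' t ⟨ht.1.le, by linarith [ht.2]⟩) hfx
  obtain ⟨p, hp, hpμ, hbandp⟩ := exists_right_exit_of_lt_abs_deriv hμ hν
    (hf.mono ((Icc_subset_Icc (by linarith) le_rfl).trans hxU))
    (fun t ht => hf' t ⟨by linarith [ht.1], ht.2.le⟩) hfx
  refine ⟨q, p, hq.1, hp.2, ⟨hq.2, hp.1⟩, hqμ, hpμ, fun t ht => ?_⟩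
  rcases le_or_gt t x with htx | hxt
  · exact hbandq t ⟨ht.1, htx⟩
  · exact hbandp t ⟨hxt.le, ht.2⟩

theorem exists_mem_Ioo_add_eq_zero {g : ℝ → ℝ} {q p x : ℝ} (hf : ContinuousOn f (Icc q p))
    (hf' : ∀ t ∈ Ioo q p, deriv f t ≠ 0) (hx : x ∈ Ioo q p) (hfx : f x = 0)
    (hq : μ ≤ |f q|) (hp : μ ≤ |f p|) (hg : ContinuousOn g (Icc q p))
    (hgq : |g q| < μ) (hgp : |g p| < μ) :
    ∃ z ∈ Ioo q p, f z + g z = 0 := by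
  have hqp : q ≤ p := (hx.1.trans hx.2).le
  have hxI : x ∈ Icc q p := Ioo_subset_Icc_self hx
  have hqI : q ∈ Icc q p := left_mem_Icc.2 hqp
  have hpI : p ∈ Icc q p := right_mem_Icc.2 hqp
  have hfg : ContinuousOn (fun t => f t + g t) (Icc q p) := hf.add hg
  obtain ⟨hgq₁, hgq₂⟩ := abs_lt.1 hgq
  obtain ⟨hgp₁, hgp₂⟩ := abs_lt.1 hgp
  rcases (convex_Icc q p).strictMonoOn_or_strictAntiOn_of_deriv_ne_zero hf
    (by rwa [interior_Icc]) with hmono | hanti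
  · have hfq : f q < 0 := hfx ▸ hmono hqI hxI hx.1
    have hfp : 0 < f p := hfx ▸ hmono hxI hpI hx.2
    rw [abs_of_neg hfq] at hq
    rw [abs_of_pos hfp] at hp
    exact intermediate_value_Ioo hqp hfg ⟨by linarith, by linarith⟩
  · have hfq : 0 < f q := hfx ▸ hanti hqI hxI hx.1
    have hfp : f p < 0 := hfx ▸ hanti hxI hpI hx.2
    rw [abs_of_pos hfq] at hq
    rw [abs_of_neg hfp] at hp
    exact intermediate_value_Ioo' hqp hfg ⟨by linarith, by linarith⟩

theorem le_of_eq_of_deriv_ne_zero {q p q' p' x y : ℝ} (hf : ContinuousOn f (Ioo q p'))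
    (hf' : ∀ t ∈ Ioo q p ∪ Ioo q' p', deriv f t ≠ 0) (hx : x ∈ Ioo q p) (hy : y ∈ Ioo q' p')
    (hxy : x < y) (hfxy : f x = f y) : p ≤ q' := by
  by_contra! hq'p
  have hcover : Ioo q p' ⊆ Ioo q p ∪ Ioo q' p' := fun t ht =>
    (lt_or_ge t p).imp (fun htp => ⟨ht.1, htp⟩) (fun hpt => ⟨hq'p.trans_le hpt, ht.2⟩)
  have hinj : InjOn f (Ioo q p') :=
    ((convex_Ioo q p').strictMonoOn_or_strictAntiOn_of_deriv_ne_zero hf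
      (by rw [interior_Ioo]; exact fun t ht => hf' t (hcover ht))).elim
      StrictMonoOn.injOn StrictAntiOn.injOn
  exact hxy.ne (hinj ⟨hx.1, hxy.trans hy.2⟩ ⟨hx.1.trans hxy, hy.2⟩ hfxy)

theorem exists_zero_add_in_band_around_zero (hμ : 0 < μ) (hν : 0 < ν) {U : Set ℝ}
    (hf : ContinuousOn f U) (hrep : ∀ t ∈ U, μ < |f t| ∨ ν < |deriv f t|) {g : ℝ → ℝ}
    (hg : ContinuousOn g U) (hgμ : ∀ t ∈ U, |g t| < μ) {x : ℝ}
    (hxU : Icc (x - μ / ν) (x + μ / ν) ⊆ U) (hfx : f x = 0) :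
    ∃ q p z : ℝ, x - μ / ν ≤ q ∧ p ≤ x + μ / ν ∧ x ∈ Ioo q p ∧
      (∀ t ∈ Ioo q p, deriv f t ≠ 0) ∧ z ∈ Ioo q p ∧ f z + g z = 0 := by
  obtain ⟨q, p, hq, hp, hx, hqμ, hpμ, hband⟩ := exists_band_around_zero hμ hν hf hrep hxU hfx
  have hU : Icc q p ⊆ U := (Icc_subset_Icc hq hp).trans hxU
  have hqp : q ≤ p := (hx.1.trans hx.2).le
  have hf' : ∀ t ∈ Ioo q p, deriv f t ≠ 0 := fun t ht => abs_pos.1 <| hν.trans <|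
    (hrep t (hU (Ioo_subset_Icc_self ht))).resolve_left (hband t ht).le.not_gt
  obtain ⟨z, hz, hfz⟩ := exists_mem_Ioo_add_eq_zero (hf.mono hU) hf' hx hfx hqμ hpμ
    (hg.mono hU) (hgμ q (hU (left_mem_Icc.2 hqp))) (hgμ p (hU (right_mem_Icc.2 hqp)))
  exact ⟨q, p, z, hq, hp, hx, hf', hz, hfz⟩

end ZerosInBand

theorem stability_perturbation_general
    (μ ν : ℝ) (hμ : 0 < μ) (hν : 0 < ν)
    (a b : ℝ)
    (f : ℝ → ℝ) (hf : ContDiffOn ℝ 1 f (Set.Ioo a b))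
    (hrep : ∀ x ∈ Set.Ioo a b, μ < |f x| ∨ ν < |deriv f x|)
    (g : ℝ → ℝ) (hg : ContinuousOn g (Set.Ioo a b))
    (hgμ : ∀ x ∈ Set.Ioo a b, |g x| < μ) :
    ∃ r : ℝ → ℝ,
      (∀ x ∈ Set.Ioo a b, f x = 0 → μ / ν < x - a → μ / ν < b - x →
        f (r x) + g (r x) = 0 ∧ r x ∈ Set.Ioo (x - μ / ν) (x + μ / ν)) ∧
      (∀ x ∈ Set.Ioo a b, ∀ y ∈ Set.Ioo a b,
        f x = 0 → f y = 0 →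
        μ / ν < x - a → μ / ν < b - x → μ / ν < y - a → μ / ν < b - y →
        x ≠ y → r x ≠ r y) := by
  have hfc : ContinuousOn f (Ioo a b) := hf.continuousOn
  have key : ∀ x, f x = 0 → μ / ν < x - a ∧ μ / ν < b - x → ∃ q p z : ℝ,
      x - μ / ν ≤ q ∧ p ≤ x + μ / ν ∧ x ∈ Ioo q p ∧ (∀ t ∈ Ioo q p, deriv f t ≠ 0) ∧
      z ∈ Ioo q p ∧ f z + g z = 0 := fun x hfx hx =>
    exists_zero_add_in_band_around_zero hμ hν hfc hrep hg hgμ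
      (fun t ht => ⟨by linarith [ht.1, hx.1], by linarith [ht.2, hx.2]⟩) hfx
  choose! q p r hq hp hx hf' hr hfr using key
  have hmono : ∀ x y, f x = 0 → f y = 0 → μ / ν < x - a ∧ μ / ν < b - x →
      μ / ν < y - a ∧ μ / ν < b - y → x < y → r x < r y := by
    intro x y hfx hfy hxD hyD hxy
    have hU : Ioo (q x) (p y) ⊆ Ioo a b := fun t ht =>
      ⟨by linarith [hq x hfx hxD, ht.1, hxD.1], by linarith [hp y hfy hyD, ht.2, hyD.2]⟩
    calc r x < p x := (hr x hfx hxD).2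
      _ ≤ q y := le_of_eq_of_deriv_ne_zero (hfc.mono hU)
          (fun t ht => ht.elim (hf' x hfx hxD t) (hf' y hfy hyD t))
          (hx x hfx hxD) (hx y hfy hyD) hxy (hfx.trans hfy.symm)
      _ < r y := (hr y hfy hyD).1
  refine ⟨r, fun x _ hfx hxa hxb => ⟨hfr x hfx ⟨hxa, hxb⟩, ?_, ?_⟩,
    fun x _ y _ hfx hfy hxa hxb hya hyb hxy => ?_⟩
  · linarith [hq x hfx ⟨hxa, hxb⟩, (hr x hfx ⟨hxa, hxb⟩).1]
  · linarith [hp x hfx ⟨hxa, hxb⟩, (hr x hfx ⟨hxa, hxb⟩).2]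
  · rcases hxy.lt_or_gt with hlt | hgt
    · exact (hmono x y hfx hfy ⟨hxa, hxb⟩ ⟨hya, hyb⟩ hlt).ne
    · exact (hmono y x hfy hfx ⟨hya, hyb⟩ ⟨hxa, hxb⟩ hgt).ne'

/-- stability of zeros under perturbation. If everywhere on `I = (a, b)`
either `|f| > μ` or `|f'| > ν`, and `|g| < μ` on `I`, then each zero of `f` deep inside
`I` gives rise to a nearby zero of `f + g`, injectively. -/
theorem stability_perturbation
    (μ ν : ℝ) (hμ : 0 < μ) (hν : 0 < ν)
    (a b : ℝ) (hlen : 2 * μ / ν ≤ b - a)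
    (f : ℝ → ℝ) (hf : ContDiffOn ℝ 1 f (Set.Ioo a b))
    (hrep : ∀ x ∈ Set.Ioo a b, μ < |f x| ∨ ν < |deriv f x|)
    (g : ℝ → ℝ) (hg : ContinuousOn g (Set.Ioo a b))
    (hgμ : ∀ x ∈ Set.Ioo a b, |g x| < μ) :
    ∃ r : ℝ → ℝ,
      (∀ x ∈ Set.Ioo a b, f x = 0 → μ / ν < x - a → μ / ν < b - x →
        f (r x) + g (r x) = 0 ∧ r x ∈ Set.Ioo (x - μ / ν) (x + μ / ν)) ∧
      (∀ x ∈ Set.Ioo a b, ∀ y ∈ Set.Ioo a b,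
        f x = 0 → f y = 0 →
        μ / ν < x - a → μ / ν < b - x → μ / ν < y - a → μ / ν < b - y →
        x ≠ y → r x ≠ r y) :=
  stability_perturbation_general μ ν hμ hν a b f hf hrep g hg hgμ
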